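/- For every block k, every w̄, v ∈ ℝ^d, and every β ∈ ℝ^{n_k}: P_k(v; w̄) − D_k(β; w̄) ≥ (λ/2)·‖v − A_[k]β‖². In particular, the local primal objective always dominates the local dual objective: P_k(v; w̄) ≥ D_k(β; w̄). -/

import Mathlib

/-!
Expanding the squares and using `λ · uᵀA_[k]β = (1/n) Σᵢ βᵢ uᵀxᵢ`, the gap `P_k(v; w̄) − D_k(β; w̄)`
equals `(λ/2)‖v − A_[k]β‖²` plus `1/n` times the sum of the Fenchel–Young gaps
`ℓᵢ(zᵢ) + ℓᵢ*(−βᵢ) + βᵢzᵢ` at `zᵢ = (w̄ + v)ᵀxᵢ`, each of which is nonnegative.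
-/

open Finset MeasureTheory

noncomputable section

/-- Squared Euclidean norm of a finite real vector. -/
def sqnorm {m : ℕ} (v : Fin m → ℝ) : ℝ := ∑ j, v j ^ 2

/-- Euclidean norm of a finite real vector. -/
def euclNorm {m : ℕ} (v : Fin m → ℝ) : ℝ := Real.sqrt (sqnorm v)

/-- Euclidean inner product. -/
def dotp {m : ℕ} (u v : Fin m → ℝ) : ℝ := ∑ j, u j * v j

/-- `g` is the (real-valued) Fenchel conjugate of `f`:
`g u` is the least upper bound of `z ↦ u*z - f z`. -/
def IsFenchelConj (f g : ℝ → ℝ) : Prop :=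
  ∀ u : ℝ, IsLUB (Set.range fun z : ℝ => u * z - f z) (g u)

/-- `f` is smooth with constant `c`: differentiable with `c`-Lipschitz derivative. -/
def SmoothWith (c : ℝ) (f : ℝ → ℝ) : Prop :=
  Differentiable ℝ f ∧ ∀ z z' : ℝ, |deriv f z - deriv f z'| ≤ c * |z - z'|

/-- `g : ℝ → ℝ` is `γ`-strongly convex. -/
def StrongConvexWith (γ : ℝ) (g : ℝ → ℝ) : Prop :=
  ConvexOn ℝ Set.univ fun u => g u - γ / 2 * u ^ 2

variable {n d K : ℕ}

/-- `A α` where the `i`-th column of `A` is `x i / (λ n)`. -/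
def matA (lam : ℝ) (x : Fin n → Fin d → ℝ) (α : Fin n → ℝ) : Fin d → ℝ :=
  ∑ i, (α i / (lam * n)) • x i

/-- The block-`k` subvector `α_[k]` of `α`. -/
def blkOf (part : Fin n → Fin K) (k : Fin K) (α : Fin n → ℝ) :
    {i : Fin n // part i = k} → ℝ :=
  fun i => α i.1

/-- `A_[k] β`: the block-`k` submatrix of `A` applied to a block-`k` vector. -/
def blkA (lam : ℝ) (x : Fin n → Fin d → ℝ) (part : Fin n → Fin K) (k : Fin K)
    (β : {i : Fin n // part i = k} → ℝ) : Fin d → ℝ :=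
  ∑ i : {i : Fin n // part i = k}, (β i / (lam * n)) • x i.1

/-- `α⟨k←β⟩`: replace the block-`k` coordinates of `α` by `β`. -/
def updBlk (part : Fin n → Fin K) (k : Fin K) (α : Fin n → ℝ)
    (β : {i : Fin n // part i = k} → ℝ) : Fin n → ℝ :=
  fun i => if h : part i = k then β ⟨i, h⟩ else α i

/-- `ι_k β`: zero-padding of a block-`k` vector to a full vector. -/
def padBlk (part : Fin n → Fin K) (k : Fin K)
    (β : {i : Fin n // part i = k} → ℝ) : Fin n → ℝ :=
  fun i => if h : part i = k then β ⟨i, h⟩ else 0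

/-- The primal objective `P(w)`. -/
def primalObj (lam : ℝ) (x : Fin n → Fin d → ℝ) (l : Fin n → ℝ → ℝ)
    (w : Fin d → ℝ) : ℝ :=
  lam / 2 * sqnorm w + (1 / (n : ℝ)) * ∑ i, l i (dotp w (x i))

/-- The dual objective `D(α)`. -/
def dualObj (lam : ℝ) (x : Fin n → Fin d → ℝ) (lstar : Fin n → ℝ → ℝ)
    (α : Fin n → ℝ) : ℝ :=
  -(lam / 2) * sqnorm (matA lam x α) - (1 / (n : ℝ)) * ∑ i, lstar i (-(α i))

/-- The local suboptimality `ε_{D,k}(α)` on block `k`. -/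
def epsD (lam : ℝ) (x : Fin n → Fin d → ℝ) (lstar : Fin n → ℝ → ℝ)
    (part : Fin n → Fin K) (k : Fin K) (α : Fin n → ℝ) : ℝ :=
  ⨆ β : {i : Fin n // part i = k} → ℝ,
    dualObj lam x lstar (updBlk part k α β) - dualObj lam x lstar α

/-- `σ_min`: the supremum over nonzero `α` of
`λ²n²·(Σ_k ‖A_[k]α_[k]‖² − ‖Aα‖²)/‖α‖²`. -/
def sigmaMin (lam : ℝ) (x : Fin n → Fin d → ℝ) (part : Fin n → Fin K) : ℝ :=
  sSup { r : ℝ | ∃ α : Fin n → ℝ, α ≠ 0 ∧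
    r = lam ^ 2 * (n : ℝ) ^ 2 *
      ((∑ k, sqnorm (blkA lam x part k (blkOf part k α))) - sqnorm (matA lam x α)) /
        sqnorm α }

/-- The local dual objective `D_k(β; w̄)` on block `k`. -/
def locDual (lam : ℝ) (x : Fin n → Fin d → ℝ) (lstar : Fin n → ℝ → ℝ)
    (part : Fin n → Fin K) (k : Fin K) (wbar : Fin d → ℝ)
    (β : {i : Fin n // part i = k} → ℝ) : ℝ :=
  -(lam / 2) * sqnorm (wbar + blkA lam x part k β)
    - (1 / (n : ℝ)) * ∑ i : {i : Fin n // part i = k}, lstar i.1 (-(β i))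
    + lam / 2 * sqnorm wbar

/-- The local primal objective `P_k(v; w̄)` on block `k`. -/
def locPrimal (lam : ℝ) (x : Fin n → Fin d → ℝ) (l : Fin n → ℝ → ℝ)
    (part : Fin n → Fin K) (k : Fin K) (wbar v : Fin d → ℝ) : ℝ :=
  (1 / (n : ℝ)) * ∑ i : {i : Fin n // part i = k}, l i.1 (dotp (wbar + v) (x i.1))
    + lam / 2 * sqnorm v

/-- Run `H` iterations of the coordinate-wise step `st`, where `ω` lists
the (randomly chosen) coordinates used in the successive iterations. -/
def iterRun {γ : Type*} {ι : Type*} (st : ι → γ → γ) :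
    (H : ℕ) → (Fin H → ι) → γ → γ
  | 0, _, b => b
  | H + 1, ω, b => iterRun st H (fun h => ω h.succ) (st (ω 0) b)

lemma dotp_eq_dotProduct {m : ℕ} (u v : Fin m → ℝ) : dotp u v = u ⬝ᵥ v := rfl

lemma sqnorm_eq_dotp {m : ℕ} (v : Fin m → ℝ) : sqnorm v = dotp v v := by
  simp only [sqnorm, dotp, sq]

lemma sqnorm_nonneg {m : ℕ} (v : Fin m → ℝ) : 0 ≤ sqnorm v :=
  Finset.sum_nonneg fun _ _ => sq_nonneg _

lemma sqnorm_add {m : ℕ} (a b : Fin m → ℝ) :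
    sqnorm (a + b) = sqnorm a + 2 * dotp a b + sqnorm b := by
  simp only [sqnorm_eq_dotp, dotp_eq_dotProduct, add_dotProduct, dotProduct_add,
    dotProduct_comm b a]
  ring

lemma sqnorm_sub {m : ℕ} (a b : Fin m → ℝ) :
    sqnorm (a - b) = sqnorm a - 2 * dotp a b + sqnorm b := by
  simp only [sqnorm_eq_dotp, dotp_eq_dotProduct, sub_dotProduct, dotProduct_sub,
    dotProduct_comm b a]
  ring

lemma dotp_add_left {m : ℕ} (a b c : Fin m → ℝ) : dotp (a + b) c = dotp a c + dotp b c :=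
  add_dotProduct a b c

lemma dotp_sum_smul {m : ℕ} {ι : Type*} [Fintype ι] (u : Fin m → ℝ) (c : ι → ℝ)
    (w : ι → Fin m → ℝ) : dotp u (∑ i, c i • w i) = ∑ i, c i * dotp u (w i) := by
  simp only [dotp_eq_dotProduct, dotProduct_sum, dotProduct_smul, smul_eq_mul]

lemma IsFenchelConj.mul_le_add {f g : ℝ → ℝ} (h : IsFenchelConj f g) (u z : ℝ) :
    u * z ≤ f z + g u := by
  have := (h u).1 ⟨z, rfl⟩
  linarith

lemma mul_dotp_blkA {lam : ℝ} (hlam : lam ≠ 0) (x : Fin n → Fin d → ℝ)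
    (part : Fin n → Fin K) (k : Fin K) (β : {i : Fin n // part i = k} → ℝ)
    (u : Fin d → ℝ) :
    lam * dotp u (blkA lam x part k β) = 1 / (n : ℝ) * ∑ i, β i * dotp u (x i.1) := by
  rw [blkA, dotp_sum_smul, Finset.mul_sum, Finset.mul_sum]
  refine Finset.sum_congr rfl fun i _ => ?_
  rw [← mul_assoc, mul_div_assoc', mul_div_mul_left _ _ hlam]
  ring

lemma locPrimal_sub_locDual {lam : ℝ} (hlam : lam ≠ 0) (x : Fin n → Fin d → ℝ)
    (l lstar : Fin n → ℝ → ℝ) (part : Fin n → Fin K) (k : Fin K)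
    (wbar v : Fin d → ℝ) (β : {i : Fin n // part i = k} → ℝ) :
    locPrimal lam x l part k wbar v - locDual lam x lstar part k wbar β
      = lam / 2 * sqnorm (v - blkA lam x part k β)
        + 1 / (n : ℝ) * ∑ i, (l i.1 (dotp (wbar + v) (x i.1)) + lstar i.1 (-β i)
            + β i * dotp (wbar + v) (x i.1)) := by
  have hcross := mul_dotp_blkA hlam x part k β (wbar + v)
  rw [dotp_add_left] at hcross
  simp only [locPrimal, locDual, sqnorm_add, sqnorm_sub, Finset.sum_add_distrib]
  linear_combination hcross

theorem local_weak_duality_general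
    (n d K : ℕ)
    (lam : ℝ) (hlam : 0 < lam)
    (x : Fin n → Fin d → ℝ)
    (l lstar : Fin n → ℝ → ℝ)
    (hconj : ∀ i, IsFenchelConj (l i) (lstar i))
    (part : Fin n → Fin K) (k : Fin K)
    (wbar v : Fin d → ℝ) (β : {i : Fin n // part i = k} → ℝ) :
    lam / 2 * sqnorm (v - blkA lam x part k β)
      ≤ locPrimal lam x l part k wbar v - locDual lam x lstar part k wbar β ∧
    locDual lam x lstar part k wbar β ≤ locPrimal lam x l part k wbar v := by
  have hgaps : 0 ≤ 1 / (n : ℝ) * ∑ i : {i : Fin n // part i = k},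
      (l i.1 (dotp (wbar + v) (x i.1)) + lstar i.1 (-β i) + β i * dotp (wbar + v) (x i.1)) :=
    mul_nonneg (by positivity) <| Finset.sum_nonneg fun i _ => by
      linarith [(hconj i.1).mul_le_add (-β i) (dotp (wbar + v) (x i.1))]
  have hquad : 0 ≤ lam / 2 * sqnorm (v - blkA lam x part k β) :=
    mul_nonneg (by positivity) (sqnorm_nonneg _)
  have hgap := locPrimal_sub_locDual hlam.ne' x l lstar part k wbar v β
  constructor <;> linarith

/-- local weak duality with quadratic gap. -/
theorem local_weak_duality
    (n d K : ℕ) (hn : 0 < n) (hd : 0 < d) (hK : 0 < K)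
    (lam : ℝ) (hlam : 0 < lam)
    (x : Fin n → Fin d → ℝ)
    (l lstar : Fin n → ℝ → ℝ)
    (hconj : ∀ i, IsFenchelConj (l i) (lstar i))
    (part : Fin n → Fin K) (k : Fin K)
    (wbar v : Fin d → ℝ) (β : {i : Fin n // part i = k} → ℝ) :
    lam / 2 * sqnorm (v - blkA lam x part k β)
      ≤ locPrimal lam x l part k wbar v - locDual lam x lstar part k wbar β ∧
    locDual lam x lstar part k wbar β ≤ locPrimal lam x l part k wbar v :=
  local_weak_duality_general n d K lam hlam x l lstar hconj part k wbar v β
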